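/- arXiv:1906.10080 — 2 statements merged into one kernel-verified Lean document; each statement's English description precedes it below -/
import Mathlib

section
/- Let a, b be coprime positive integers and let x, x', y, y' be nonzero complex numbers. If x^a * y^b = x'^a * y'^b, then there exists a complex number s ≠ 0 such that x = s^b * x' and y = s^(-a) * y'. -/
/-!
Put `u = x / x'` and `v = y / y'`, so that `u ^ a * v ^ b = 1`. Choosing a Bézout relation
`p * a + q * b = 1`, the element `s = u ^ q * v ^ (-p)` satisfies `s ^ b = u` and `s ^ (-a) = v`.
-/

theorem exists_zpow_eq_of_zpow_mul_zpow_eq_one {G : Type*} [CommGroup G] {a b : ℤ}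
    (hab : IsCoprime a b) {u v : G} (h : u ^ a * v ^ b = 1) :
    ∃ s : G, s ^ b = u ∧ s ^ (-a) = v := by
  obtain ⟨p, q, hpq⟩ := hab
  have hu : u ^ a = (v ^ b)⁻¹ := eq_inv_of_mul_eq_one_left h
  have hv : v ^ b = (u ^ a)⁻¹ := eq_inv_of_mul_eq_one_right h
  refine ⟨u ^ q * v ^ (-p), ?_, ?_⟩
  · calc (u ^ q * v ^ (-p)) ^ b = u ^ (q * b) * (v ^ b) ^ (-p) := by
          rw [mul_zpow, ← zpow_mul, ← zpow_mul, ← zpow_mul, mul_comm b]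
      _ = u ^ (p * a + q * b) := by
          rw [hv, inv_zpow', neg_neg, ← zpow_mul, ← zpow_add, add_comm, mul_comm a]
      _ = u := by rw [hpq, zpow_one]
  · calc (u ^ q * v ^ (-p)) ^ (-a) = (u ^ a) ^ (-q) * v ^ (p * a) := by
          rw [mul_zpow, ← zpow_mul, ← zpow_mul, ← zpow_mul]; congr 2 <;> ring
      _ = v ^ (p * a + q * b) := by
          rw [hu, inv_zpow', neg_neg, ← zpow_mul, ← zpow_add, add_comm, mul_comm b]
      _ = v := by rw [hpq, zpow_one]

theorem exists_eq_zpow_mul_of_zpow_mul_zpow_eq {G : Type*} [CommGroup G] {a b : ℤ}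
    (hab : IsCoprime a b) {x x' y y' : G} (h : x ^ a * y ^ b = x' ^ a * y' ^ b) :
    ∃ s : G, x = s ^ b * x' ∧ y = s ^ (-a) * y' := by
  have h₁ : (x / x') ^ a * (y / y') ^ b = 1 := by
    rw [div_zpow, div_zpow, div_mul_div_comm, h, div_self']
  obtain ⟨s, hx, hy⟩ := exists_zpow_eq_of_zpow_mul_zpow_eq_one hab h₁
  exact ⟨s, (div_eq_iff_eq_mul.mp hx.symm), (div_eq_iff_eq_mul.mp hy.symm)⟩

theorem orbit_equivalence_of_monomial_eq_general
    (a b : ℕ) (hab : Nat.Coprime a b)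
    (x x' y y' : ℂ) (hx : x ≠ 0) (hx' : x' ≠ 0) (hy : y ≠ 0) (hy' : y' ≠ 0)
    (h : x ^ a * y ^ b = x' ^ a * y' ^ b) :
    ∃ s : ℂ, s ≠ 0 ∧ x = s ^ b * x' ∧ y = s ^ (-(a : ℤ)) * y' := by
  lift x to ℂˣ using hx.isUnit
  lift x' to ℂˣ using hx'.isUnit
  lift y to ℂˣ using hy.isUnit
  lift y' to ℂˣ using hy'.isUnit
  have hU : x ^ (a : ℤ) * y ^ (b : ℤ) = x' ^ (a : ℤ) * y' ^ (b : ℤ) := by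
    simp only [zpow_natCast]; exact_mod_cast h
  obtain ⟨s, rfl, rfl⟩ :=
    exists_eq_zpow_mul_of_zpow_mul_zpow_eq (Nat.isCoprime_iff_coprime.mpr hab) hU
  exact ⟨s, s.ne_zero, by push_cast; rfl, by push_cast; rfl⟩

/-- If `a`, `b` are coprime positive integers and `x, x', y, y'` are nonzero complex
numbers with `x^a * y^b = x'^a * y'^b`, then there exists `s ≠ 0` with
`x = s^b * x'` and `y = s^(-a) * y'`. -/
theorem orbit_equivalence_of_monomial_eq
    (a b : ℕ) (ha : 0 < a) (hb : 0 < b) (hab : Nat.Coprime a b)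
    (x x' y y' : ℂ) (hx : x ≠ 0) (hx' : x' ≠ 0) (hy : y ≠ 0) (hy' : y' ≠ 0)
    (h : x ^ a * y ^ b = x' ^ a * y' ^ b) :
    ∃ s : ℂ, s ≠ 0 ∧ x = s ^ b * x' ∧ y = s ^ (-(a : ℤ)) * y' :=
  orbit_equivalence_of_monomial_eq_general a b hab x x' y y' hx hx' hy hy' h
end

section
/- Let μ(x,y) = (Σ_{i,j}|x_i y_j|²(b e_i − a e_j))/(Σ_{i,j}|x_i y_j|²) with e_0 = 0. If μ(x,y) lies on the boundary of P = conv{b e_i − a e_j} and Σ_{i=0}^n x_i^α y_i^β = 0 with α = da, β = db, then x_i y_i = 0 for all i = 0, 1, …, n. -/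
/-- The vector `e_i` for `i = 0,…,n`, with the convention `e_0 = 0`. -/
def stdVec (n : ℕ) (i : Fin (n+1)) : Fin n → ℝ := fun k => if (k : ℕ) + 1 = (i : ℕ) then 1 else 0

/-- The vertex `b e_i − a e_j` of the moment polytope. -/
def momVert (n a b : ℕ) (i j : Fin (n+1)) : Fin n → ℝ :=
  (b : ℝ) • stdVec n i - (a : ℝ) • stdVec n j

/-!
If `x_i y_i ≠ 0`, then `μ(x, y)` is a convex combination of the vertices `b e_k − a e_l` of `P`
giving positive weight to `(b − a) e_i`. This point is interior to `P`, because `P` contains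
`0 = (b − a) e_0` in its interior (it contains `b e_k` and `−a e_k` for every `k`) and
`(b − a) e_i` lies strictly between `0` and one of `b e_i`, `−a e_i`. A convex combination
with positive weight on an interior point is interior, so `μ(x, y)` is not on the boundary.
-/

open Finset

section Convex

variable {ι 𝕜 E : Type*} [Field 𝕜] [LinearOrder 𝕜] [IsStrictOrderedRing 𝕜]
  [AddCommGroup E] [Module 𝕜 E] [TopologicalSpace E] [IsTopologicalAddGroup E]
  [ContinuousConstSMul 𝕜 E] {s : Set E}

theorem Convex.smul_mem_interior_of_zero_mem_interior (hs : Convex 𝕜 s)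
    (h0 : (0 : E) ∈ interior s) {y : E} (hy : y ∈ s) {θ : 𝕜} (hθ₀ : 0 ≤ θ) (hθ₁ : θ < 1) :
    θ • y ∈ interior s := by
  simpa using hs.combo_interior_self_mem_interior h0 hy (sub_pos.2 hθ₁) hθ₀ (sub_add_cancel 1 θ)

theorem Convex.centerMass_mem_interior_of_pos (hs : Convex 𝕜 s) {t : Finset ι} {w : ι → 𝕜}
    {z : ι → E} (hw : ∀ i ∈ t, 0 ≤ w i) (hz : ∀ i ∈ t, z i ∈ s) {i₀ : ι} (hi₀ : i₀ ∈ t)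
    (hw₀ : 0 < w i₀) (hz₀ : z i₀ ∈ interior s) : t.centerMass w z ∈ interior s := by
  classical
  have hw_rest : ∀ i ∈ t.erase i₀, 0 ≤ w i := fun i hi => hw i (mem_of_mem_erase hi)
  rw [← insert_erase hi₀]
  rcases (sum_nonneg hw_rest).eq_or_lt with hsum | hsum
  · have hzero : ∀ i ∈ insert i₀ (t.erase i₀), i ∉ ({i₀} : Finset ι) → w i = 0 := by
      intro i hi hne
      rw [mem_singleton] at hne
      exact (sum_eq_zero_iff_of_nonneg hw_rest).1 hsum.symm i (mem_of_mem_insert_of_ne hi hne)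
    rw [← centerMass_subset z (singleton_subset_iff.2 (mem_insert_self _ _)) hzero,
      centerMass_singleton _ _ hw₀.ne']
    exact hz₀
  · rw [centerMass_insert _ _ _ (notMem_erase i₀ t) hsum.ne']
    refine hs.combo_interior_self_mem_interior hz₀
      (hs.centerMass_mem hw_rest hsum fun i hi => hz i (mem_of_mem_erase hi))
      (by positivity) (by positivity) ?_
    field_simp

end Convex

theorem zero_mem_interior_of_single_mem {ι : Type*} [Fintype ι] [DecidableEq ι]
    {s : Set (ι → ℝ)} (hs : Convex ℝ s) {r r' : ℝ} (hr : 0 < r) (hr' : 0 < r')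
    (h0 : (0 : ι → ℝ) ∈ s) (hpos : ∀ k, Pi.single k r ∈ s) (hneg : ∀ k, Pi.single k (-r') ∈ s) :
    (0 : ι → ℝ) ∈ interior s := by
  set m : ℝ := Fintype.card ι + 1
  have hm : 0 < m := by positivity
  set ρ := min r r'
  have hsingle : ∀ k t, |t| ≤ ρ → Pi.single k t ∈ s := by
    intro k t ht
    have hconv : Convex ℝ {t : ℝ | Pi.single k t ∈ s} :=
      hs.linear_preimage (LinearMap.single ℝ (fun _ => ℝ) k)
    exact hconv.ordConnected.out (hneg k) (hpos k)
      ⟨by linarith [neg_abs_le t, min_le_right r r'], by linarith [le_abs_self t, min_le_left r r']⟩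
  rw [mem_interior_iff_mem_nhds, Metric.mem_nhds_iff]
  refine ⟨ρ / m, by positivity, fun δ hδ => ?_⟩
  have hδ_coord : ∀ k, |m * δ k| ≤ ρ := fun k => by
    have := (norm_le_pi_norm δ k).trans_lt (mem_ball_zero_iff.mp hδ)
    rw [Real.norm_eq_abs, lt_div_iff₀ hm] at this
    rw [abs_mul, abs_of_pos hm]
    linarith
  -- `δ` is the average of `0` and the points `m δ_k e_k`, where `m = card ι + 1`
  let z : Option ι → ι → ℝ := fun j => j.elim 0 fun k => Pi.single k (m * δ k)
  have hδ_eq : δ = ∑ j, m⁻¹ • z j := by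
    simp only [z, Fintype.sum_option, Option.elim_none, Option.elim_some, smul_zero, zero_add,
      ← Pi.single_smul, smul_eq_mul, inv_mul_cancel_left₀ hm.ne', Finset.univ_sum_single]
  rw [hδ_eq]
  refine hs.sum_mem (fun _ _ => by positivity) ?_ fun j _ => ?_
  · rw [sum_const, card_univ, Fintype.card_option, nsmul_eq_mul]
    push_cast
    exact mul_inv_cancel₀ hm.ne'
  · cases j with
    | none => exact h0
    | some k => exact hsingle k _ (hδ_coord k)

section MomentPolytope

variable (n a b : ℕ)

def momPolytope : Set (Fin n → ℝ) :=
  convexHull ℝ (Set.range fun p : Fin (n+1) × Fin (n+1) => momVert n a b p.1 p.2)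

theorem stdVec_zero : stdVec n 0 = 0 := by
  funext k
  simp [stdVec]

theorem stdVec_succ (k : Fin n) : stdVec n k.succ = Pi.single k 1 := by
  funext l
  simp [stdVec, Pi.single_apply, Fin.ext_iff]

theorem momVert_zero_zero : momVert n a b 0 0 = 0 := by
  simp [momVert, stdVec_zero]

theorem momVert_succ_zero (k : Fin n) : momVert n a b k.succ 0 = Pi.single k (b : ℝ) := by
  simp [momVert, stdVec_zero, stdVec_succ, ← Pi.single_smul]

theorem momVert_zero_succ (k : Fin n) : momVert n a b 0 k.succ = Pi.single k (-(a : ℝ)) := by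
  simp [momVert, stdVec_zero, stdVec_succ, ← Pi.single_smul, Pi.single_neg]

theorem momVert_succ_succ (k : Fin n) :
    momVert n a b k.succ k.succ = Pi.single k ((b : ℝ) - a) := by
  simp [momVert, stdVec_succ, ← Pi.single_smul, ← Pi.single_sub]

theorem momVert_mem_momPolytope (i j : Fin (n+1)) : momVert n a b i j ∈ momPolytope n a b :=
  subset_convexHull ℝ _ ⟨(i, j), rfl⟩

variable {n a b}

theorem zero_mem_interior_momPolytope (ha : 0 < a) (hb : 0 < b) :
    (0 : Fin n → ℝ) ∈ interior (momPolytope n a b) := by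
  refine zero_mem_interior_of_single_mem (convex_convexHull ℝ _) (r := b) (r' := a)
    (by exact_mod_cast hb) (by exact_mod_cast ha) ?_ (fun k => ?_) (fun k => ?_)
  · simpa [momVert_zero_zero] using momVert_mem_momPolytope n a b 0 0
  · simpa [momVert_succ_zero] using momVert_mem_momPolytope n a b k.succ 0
  · simpa [momVert_zero_succ] using momVert_mem_momPolytope n a b 0 k.succ

theorem momVert_self_mem_interior_momPolytope (ha : 0 < a) (hb : 0 < b) (i : Fin (n+1)) :
    momVert n a b i i ∈ interior (momPolytope n a b) := by
  have h0 := zero_mem_interior_momPolytope (n := n) ha hb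
  have hconv : Convex ℝ (momPolytope n a b) := convex_convexHull ℝ _
  have ha' : (0 : ℝ) < a := by exact_mod_cast ha
  have hb' : (0 : ℝ) < b := by exact_mod_cast hb
  cases i using Fin.cases with
  | zero => rwa [momVert_zero_zero]
  | succ k =>
    rw [momVert_succ_succ]
    rcases le_total (a : ℝ) b with hab | hab
    · have h := hconv.smul_mem_interior_of_zero_mem_interior h0
        (momVert_mem_momPolytope n a b k.succ 0) (θ := (b - a) / b)
        (div_nonneg (by linarith) hb'.le) ((div_lt_one hb').2 (by linarith))
      rwa [momVert_succ_zero, ← Pi.single_smul, smul_eq_mul, div_mul_cancel₀ _ hb'.ne'] at h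
    · have h := hconv.smul_mem_interior_of_zero_mem_interior h0
        (momVert_mem_momPolytope n a b 0 k.succ) (θ := (a - b) / a)
        (div_nonneg (by linarith) ha'.le) ((div_lt_one ha').2 (by linarith))
      rwa [momVert_zero_succ, ← Pi.single_smul, smul_eq_mul, mul_neg,
        div_mul_cancel₀ _ ha'.ne', neg_sub] at h

end MomentPolytope

theorem boundary_fibre_vanishing_general (n a b : ℕ)
    (ha : 0 < a) (hb : 0 < b)
    (x y : Fin (n+1) → ℂ)
    (hbd : (∑ i, ∑ j, ‖x i * y j‖ ^ 2)⁻¹ •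
        (∑ i, ∑ j, (‖x i * y j‖ ^ 2) • momVert n a b i j)
      ∈ frontier (convexHull ℝ
        (Set.range fun p : Fin (n+1) × Fin (n+1) => momVert n a b p.1 p.2))) :
    ∀ i, x i * y i = 0 := by
  intro i
  by_contra hxy
  have hμ : (∑ i, ∑ j, ‖x i * y j‖ ^ 2)⁻¹ • (∑ i, ∑ j, (‖x i * y j‖ ^ 2) • momVert n a b i j)
      = univ.centerMass (fun p : Fin (n+1) × Fin (n+1) => ‖x p.1 * y p.2‖ ^ 2)
          (fun p => momVert n a b p.1 p.2) := by
    simp only [centerMass, Fintype.sum_prod_type]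
  exact hbd.2 (hμ ▸ (convex_convexHull ℝ _).centerMass_mem_interior_of_pos
    (fun p _ => by positivity) (fun p _ => momVert_mem_momPolytope n a b p.1 p.2)
    (mem_univ (i, i)) (by positivity) (momVert_self_mem_interior_momPolytope ha hb i))

/-- If the moment map value of `([x],[y])` lies on the boundary of the polytope
`P = conv{b eᵢ − a eⱼ}` and `Σ xᵢ^α yᵢ^β = 0` with `α = d·a`, `β = d·b`, then
`xᵢ yᵢ = 0` for all `i`. -/
theorem boundary_fibre_vanishing (n a b d : ℕ) (hn : 2 ≤ n)
    (ha : 0 < a) (hb : 0 < b) (hd : 0 < d) (hab : Nat.Coprime a b)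
    (x y : Fin (n+1) → ℂ) (hx : x ≠ 0) (hy : y ≠ 0)
    (hbd : (∑ i, ∑ j, ‖x i * y j‖ ^ 2)⁻¹ •
        (∑ i, ∑ j, (‖x i * y j‖ ^ 2) • momVert n a b i j)
      ∈ frontier (convexHull ℝ
        (Set.range fun p : Fin (n+1) × Fin (n+1) => momVert n a b p.1 p.2)))
    (heq : ∑ i, x i ^ (d * a) * y i ^ (d * b) = 0) :
    ∀ i, x i * y i = 0 :=
  boundary_fibre_vanishing_general n a b ha hb x y hbd
end
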